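/- There exists a finite labeled MDP M' with an initial state u and two propositional labels P_1, P_2 such that: (a) there exists a (randomized, history-dependent) strategy σ with Pr^σ_u(□◇P_1) > 0 and Pr^σ_u(□◇P_2) > 0 (indeed both probabilities equal to 1/2); (b) no memoryless strategy σ satisfies Pr^σ_u(□◇P_1) > 0 and Pr^σ_u(□◇P_2) > 0; and (c) no pure (deterministic) strategy σ satisfies Pr^σ_u(□◇P_1) > 0 and Pr^σ_u(□◇P_2) > 0. -/

import Mathlib

open scoped BigOperators
open MeasureTheory

/-- A finite-state Markov decision process: a finite set of states `V`, a finite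
action alphabet `A`, a nonempty set of enabled actions at each state, and for each
state and enabled action a probability distribution on next states. -/
structure MDP (V A : Type) [Fintype V] [Fintype A] where
  enabled : V → Finset A
  enabled_nonempty : ∀ v, (enabled v).Nonempty
  p : V → A → V → ℝ
  p_nonneg : ∀ v a v', 0 ≤ p v a v'
  p_sum : ∀ v, ∀ a ∈ enabled v, ∑ v', p v a v' = 1

namespace MDP

variable {V A : Type} [Fintype V] [Fintype A]

/-- A (history-dependent, randomized) strategy: given the list of past
(state, action) pairs (most recent first) and the current state, a probability
distribution on actions, supported on the enabled actions. -/
structure Strategy (M : MDP V A) where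
  act : List (V × A) → V → A → ℝ
  act_nonneg : ∀ h v a, 0 ≤ act h v a
  act_support : ∀ h v a, a ∉ M.enabled v → act h v a = 0
  act_sum : ∀ h v, ∑ a, act h v a = 1

/-- A strategy is memoryless (stationary) if it depends only on the current state. -/
def Strategy.Memoryless {M : MDP V A} (σ : M.Strategy) : Prop :=
  ∀ h h' v, σ.act h v = σ.act h' v

/-- A strategy is pure (deterministic) if it always plays a single action with
probability 1. -/
def Strategy.Pure {M : MDP V A} (σ : M.Strategy) : Prop :=
  ∀ h v, ∃ a, σ.act h v a = 1

/-- `α` is a probability distribution on `V`. -/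
def IsDist (α : V → ℝ) : Prop :=
  (∀ v, 0 ≤ α v) ∧ ∑ v, α v = 1

/-- The point (Dirac) distribution at `u`. -/
def diracD [DecidableEq V] (u : V) : V → ℝ := fun v => if v = u then 1 else 0

/-- The `m`-th binary digit of `x`. -/
noncomputable def bit (m : ℕ) (x : ℝ) : ℝ :=
  if ⌊x * 2 ^ (m + 1)⌋ % 2 = 1 then 1 else 0

/-- Extracts from a single seed `x ∈ [0,1]` a sequence of independent uniform
`[0,1]` samples, by splitting the binary digits of `x`. -/
noncomputable def unif (k : ℕ) (x : ℝ) : ℝ :=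
  ∑' n : ℕ, bit (Nat.pair k n) x / 2 ^ (n + 1)

/-- Inverse-CDF sampling from a distribution `q` on a finite type, using the
uniform sample `u`. -/
noncomputable def sample {S : Type} [Fintype S] [Nonempty S] (q : S → ℝ) (u : ℝ) : S :=
  let e := Fintype.equivFin S
  if h : (Finset.univ.filter fun i => u < ∑ j ∈ Finset.Iic i, q (e.symm j)).Nonempty then
    e.symm ((Finset.univ.filter fun i => u < ∑ j ∈ Finset.Iic i, q (e.symm j)).min' h)
  else Classical.arbitrary S

variable [Nonempty V] [Nonempty A]

/-- The random run of `M` under strategy `σ` from initial distribution `α`, driven by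
the random seed `x`: at time `n` it returns the list of past (state, action) pairs
(most recent first) together with the current state and the action chosen there. -/
noncomputable def run (M : MDP V A) (σ : M.Strategy) (α : V → ℝ) (x : ℝ) :
    ℕ → List (V × A) × (V × A)
  | 0 =>
      let s := sample α (unif 0 x)
      ([], (s, sample (σ.act [] s) (unif 1 x)))
  | n + 1 =>
      let r := run M σ α x n
      let s' := sample (M.p r.2.1 r.2.2) (unif (2 * n + 2) x)
      (r.2 :: r.1, (s', sample (σ.act (r.2 :: r.1) s') (unif (2 * n + 3) x)))

/-- The state at time `n` of the run driven by seed `x`. -/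
noncomputable def stateAt (M : MDP V A) (σ : M.Strategy) (α : V → ℝ) (x : ℝ) (n : ℕ) : V :=
  (M.run σ α x n).2.1

/-- The probability, under strategy `σ` from initial distribution `α`, that the
infinite trajectory of states belongs to the event `E`. -/
noncomputable def PrEvent (M : MDP V A) (σ : M.Strategy) (α : V → ℝ) (E : Set (ℕ → V)) : ℝ :=
  (volume {x : ℝ | x ∈ Set.Icc (0 : ℝ) 1 ∧ M.stateAt σ α x ∈ E}).toReal

/-- The probability of eventually visiting the set `F` (the event `◇F`). -/
noncomputable def PrReach (M : MDP V A) (σ : M.Strategy) (α : V → ℝ) (F : Set V) : ℝ :=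
  M.PrEvent σ α {w | ∃ n, w n ∈ F}

/-- A state is absorbing if it has a single enabled action, which loops on it with
probability 1. -/
def Absorbing (M : MDP V A) (v : V) : Prop :=
  ∃ a, M.enabled v = {a} ∧ M.p v a v = 1

/-- One positive-probability step of the underlying graph of the MDP. -/
def Step (M : MDP V A) (v v' : V) : Prop :=
  ∃ a ∈ M.enabled v, 0 < M.p v a v'

/-- The MDP is cleaned-up w.r.t. `F`: from every state there is a path of
positive-probability transitions reaching `F`. -/
def CleanedUp (M : MDP V A) (F : Set V) : Prop :=
  ∀ v, ∃ w ∈ F, Relation.ReflTransGen M.Step v w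

end MDP

/-- The Büchi event `□◇P`: the set of state trajectories visiting `P` infinitely
often. -/
def InfOften {V : Type} (P : Set V) : Set (ℕ → V) :=
  {w | ∀ N : ℕ, ∃ m : ℕ, N ≤ m ∧ w m ∈ P}


/-!
In the MDP used here, state `0` offers a choice between staying (action `0`) and exiting
(action `1`) to an absorbing state `1`. For almost every seed the run either stays in `0`
forever or eventually reaches `1`, so `□◇{0}` and `□◇{1}` are complementary events.
Flipping one fair coin at the start and then never exiting again splits the mass `1/2 : 1/2`.
A pure strategy makes the run independent of the seed, so one of the two events is null.
A memoryless strategy plays the same distribution `q` at every visit of `0`: if `q 1 = 0` it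
never exits, and if `q 1 > 0` then staying forever requires infinitely many samples to fall
into a set of probability `q 0 < 1`, which is a null event.

The samples are read off disjoint sets of binary digits of the seed, and all the probability
used is that `n` prescribed binary digits of a uniform number in `[0, 1)` have probability
`2⁻ⁿ`: the first `M` digits of `x` are the bits of `⌊x 2^M⌋`, which is uniform on `[0, 2^M)`.
-/

open MeasureTheory Function
open scoped ENNReal

open Finset in
theorem Nat.card_filter_testBit_mul_two_pow {ι : Type*} (M : ℕ) (h : ι → ℕ) (β : ι → Bool)
    (s : Finset ι) (hinj : Set.InjOn h s) (hlt : ∀ i ∈ s, h i < M) :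
    #{k ∈ range (2 ^ M) | ∀ i ∈ s, k.testBit (h i) = β i} * 2 ^ #s = 2 ^ M := by
  classical
  induction s using Finset.induction_on with
  | empty => simp
  | @insert a s ha ih =>
    set A := {k ∈ range (2 ^ M) | ∀ i ∈ s, k.testBit (h i) = β i}
    set A' := {k ∈ range (2 ^ M) | ∀ i ∈ insert a s, k.testBit (h i) = β i}
    have hne : ∀ i ∈ s, h a ≠ h i := fun i hi hia =>
      ha (hinj (mem_insert_self a s) (mem_insert_of_mem hi) hia ▸ hi)
    have hlt_a : 2 ^ h a < 2 ^ M := Nat.pow_lt_pow_right one_lt_two (hlt a (mem_insert_self a s))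
    have hsplit : #A = #A' + #A' := by
      rw [← card_filter_add_card_filter_not (fun k => k.testBit (h a) = β a), filter_filter]
      congr 1
      · congr 1; ext k; simp [A', and_comm]
      · -- flipping bit `h a` swaps the two halves
        refine card_bij' (fun k _ => k ^^^ 2 ^ h a) (fun k _ => k ^^^ 2 ^ h a) ?_ ?_ ?_ ?_
        all_goals simp only [A, A', mem_filter, mem_range, mem_insert, forall_eq_or_imp,
          Nat.testBit_xor, Nat.testBit_two_pow, xor_cancel_right]
        · rintro k ⟨⟨hk, hs⟩, hka⟩
          refine ⟨Nat.xor_lt_two_pow hk hlt_a, by simpa using Bool.eq_not_of_ne hka,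
            fun i hi => by simp [hne i hi, hs i hi]⟩
        · rintro k ⟨hk, hka, hs⟩
          exact ⟨⟨Nat.xor_lt_two_pow hk hlt_a, fun i hi => by simp [hne i hi, hs i hi]⟩,
            by simp [hka]⟩
        all_goals simp
    have hs := ih (hinj.mono (by simp)) fun i hi => hlt i (mem_insert_of_mem hi)
    rw [card_insert_of_notMem ha, pow_succ, ← hs, ← mul_assoc, hsplit]
    ring

theorem Bool.toNat_eq_val_iff (b : Bool) (c : Fin 2) : b.toNat = c ↔ b = decide (c = 1) := by
  revert b c; decide

namespace Real

theorem setOf_nonneg_floor_mul_eq {N : ℕ} (hN : 0 < N) (k : ℕ) :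
    {x : ℝ | 0 ≤ x ∧ ⌊x * N⌋₊ = k} = Set.Ico ((k : ℝ) / N) ((k + 1) / N) := by
  have hN' : (0 : ℝ) < N := Nat.cast_pos.mpr hN
  ext x
  simp only [Set.mem_ofPred_eq, Set.mem_Ico, div_le_iff₀ hN', lt_div_iff₀ hN']
  constructor
  · rintro ⟨hx, hk⟩
    exact (Nat.floor_eq_iff (by positivity)).mp hk
  · rintro ⟨hk, hk'⟩
    have hx : 0 ≤ x := nonneg_of_mul_nonneg_left ((Nat.cast_nonneg k).trans hk) hN'
    exact ⟨hx, (Nat.floor_eq_iff (by positivity)).mpr ⟨hk, hk'⟩⟩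

open Finset in
theorem volume_nonneg_floor_mul_mem {N : ℕ} (hN : 0 < N) (S : Finset ℕ) :
    volume {x : ℝ | 0 ≤ x ∧ ⌊x * N⌋₊ ∈ S} = #S * (N : ℝ≥0∞)⁻¹ := by
  have hunion : {x : ℝ | 0 ≤ x ∧ ⌊x * N⌋₊ ∈ S} = ⋃ k ∈ S, {x : ℝ | 0 ≤ x ∧ ⌊x * N⌋₊ = k} := by
    ext x; simp
  have hdisj : (S : Set ℕ).PairwiseDisjoint fun k => {x : ℝ | 0 ≤ x ∧ ⌊x * N⌋₊ = k} :=
    fun k _ k' _ hkk' => Set.disjoint_left.mpr fun x hx hx' => hkk' (hx.2.symm.trans hx'.2)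
  have hfiber : ∀ k : ℕ, volume {x : ℝ | 0 ≤ x ∧ ⌊x * N⌋₊ = k} = (N : ℝ≥0∞)⁻¹ := fun k => by
    rw [setOf_nonneg_floor_mul_eq hN, volume_Ico, div_sub_div_same, add_sub_cancel_left,
      ENNReal.ofReal_div_of_pos (Nat.cast_pos.mpr hN)]
    simp
  rw [hunion, measure_biUnion_finset hdisj fun k _ => by
    simpa only [setOf_nonneg_floor_mul_eq hN] using measurableSet_Ico]
  simp [hfiber]

theorem digits_two_eq_testBit (x : ℝ) {i M : ℕ} (hi : i < M) :
    (digits x 2 i : ℕ) = (⌊x * 2 ^ M⌋₊.testBit (M - 1 - i)).toNat := by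
  have hM : (2 : ℝ) ^ M = 2 ^ (i + 1) * ((2 ^ (M - 1 - i) : ℕ) : ℝ) := by
    rw [Nat.cast_pow, Nat.cast_ofNat, ← pow_add]; congr 1; omega
  rw [Nat.toNat_testBit, hM, ← mul_assoc, ← Nat.floor_div_natCast,
    mul_div_cancel_right₀ _ (by positivity)]
  simp [digits]

open Finset in
theorem volume_digits_eq {ι : Type*} [Fintype ι] (g : ι → ℕ) (hg : Injective g) (β : ι → Fin 2) :
    volume {x : ℝ | x ∈ Set.Ico 0 1 ∧ ∀ i, digits x 2 (g i) = β i} = 2⁻¹ ^ Fintype.card ι := by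
  obtain ⟨M, hgM⟩ : ∃ M, ∀ i, g i < M :=
    ⟨univ.sup g + 1, fun i => Nat.lt_succ_of_le (le_sup (mem_univ i))⟩
  have hcard := Nat.card_filter_testBit_mul_two_pow M (fun i => M - 1 - g i)
    (fun i => decide (β i = 1)) univ
    (fun i _ j _ hij => hg (by have := hgM i; have := hgM j; simp only at hij; omega))
    (fun i _ => by have := hgM i; omega)
  generalize hS : {k ∈ range (2 ^ M) |
    ∀ i ∈ univ, k.testBit (M - 1 - g i) = decide (β i = 1)} = S at hcard
  have hset : {x : ℝ | x ∈ Set.Ico 0 1 ∧ ∀ i, digits x 2 (g i) = β i} =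
      {x : ℝ | 0 ≤ x ∧ ⌊x * ((2 ^ M : ℕ) : ℝ)⌋₊ ∈ S} := by
    ext x
    simp only [← hS, Set.mem_Ico, Set.mem_ofPred_eq, mem_filter, mem_range, mem_univ,
      true_implies, Nat.cast_pow, Nat.cast_ofNat, Fin.ext_iff, digits_two_eq_testBit x (hgM _),
      Bool.toNat_eq_val_iff, and_assoc]
    refine and_congr_right fun hx => and_congr_left fun _ => ?_
    rw [Nat.floor_lt (by positivity), Nat.cast_pow, Nat.cast_ofNat]
    exact (mul_lt_iff_lt_one_left (by positivity : (0 : ℝ) < 2 ^ M)).symm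
  have hS0 : #S ≠ 0 := by
    rintro h; rw [h, zero_mul] at hcard; exact pow_ne_zero M two_ne_zero hcard.symm
  rw [hset, volume_nonneg_floor_mul_mem (by positivity), ← hcard, card_univ, Nat.cast_mul,
    ENNReal.mul_inv (by simp) (by simp), ← mul_assoc,
    ENNReal.mul_inv_cancel (Nat.cast_ne_zero.mpr hS0) (by simp), one_mul, Nat.cast_pow,
    ENNReal.inv_pow]
  norm_num

open Finset in
theorem volume_forall_not_digits_block_le (G : ℕ → ℕ → ℕ) (hG : Injective (uncurry G))
    (m : ℕ) (w : Fin 2) (T : ℕ) :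
    volume {x : ℝ | x ∈ Set.Ico 0 1 ∧ ∀ n, ¬ ∀ j < m, digits x 2 (G n j) = w} ≤
      (((2 ^ m - 1 : ℕ) : ℝ≥0∞) * 2⁻¹ ^ m) ^ T := by
  classical
  -- union bound over the digit patterns of the first `T` blocks that avoid the constant `w`
  let blocks : Finset (Fin T → Fin m → Fin 2) := Fintype.piFinset fun _ => univ.erase fun _ => w
  have hsub : {x : ℝ | x ∈ Set.Ico 0 1 ∧ ∀ n, ¬ ∀ j < m, digits x 2 (G n j) = w} ⊆
      ⋃ γ ∈ blocks, {x | x ∈ Set.Ico 0 1 ∧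
        ∀ p : Fin T × Fin m, digits x 2 (G p.1 p.2) = γ p.1 p.2} := by
    rintro x ⟨hx, hblock⟩
    simp only [Set.mem_iUnion]
    refine ⟨fun n j => digits x 2 (G n j), ?_, hx, fun p => rfl⟩
    simp only [blocks, Fintype.mem_piFinset, mem_erase, mem_univ, and_true]
    exact fun n hn => hblock n fun j hj => congrFun hn ⟨j, hj⟩
  have hinj : Injective fun p : Fin T × Fin m => G p.1 p.2 := fun p q hpq => by
    have := hG (a₁ := ((p.1 : ℕ), (p.2 : ℕ))) (a₂ := ((q.1 : ℕ), (q.2 : ℕ))) hpq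
    ext <;> simp_all
  have hcard : #blocks = (2 ^ m - 1) ^ T := by
    simp [blocks, card_erase_of_mem]
  calc _ ≤ ∑ γ ∈ blocks, volume {x | x ∈ Set.Ico 0 1 ∧
        ∀ p : Fin T × Fin m, digits x 2 (G p.1 p.2) = γ p.1 p.2} :=
        (measure_mono hsub).trans (measure_biUnion_finset_le _ _)
    _ = _ := by
      simp only [volume_digits_eq _ hinj, sum_const, hcard, nsmul_eq_mul, Fintype.card_prod,
        Fintype.card_fin]
      rw [mul_pow, ← pow_mul, mul_comm m T, Nat.cast_pow]

theorem ae_exists_digits_block_eq (G : ℕ → ℕ → ℕ) (hG : Injective (uncurry G)) (m : ℕ)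
    (w : Fin 2) : ∀ᵐ x : ℝ, x ∈ Set.Ico 0 1 → ∃ n, ∀ j < m, digits x 2 (G n j) = w := by
  have hρ : ((2 ^ m - 1 : ℕ) : ℝ≥0∞) * 2⁻¹ ^ m < 1 := by
    rw [← ENNReal.inv_pow, ← div_eq_mul_inv,
      ENNReal.div_lt_iff (Or.inl (by simp)) (Or.inl (by simp)), one_mul]
    exact_mod_cast Nat.sub_lt (by positivity) one_pos
  have hnull := le_antisymm (ge_of_tendsto' (ENNReal.tendsto_pow_atTop_nhds_zero_of_lt_one hρ)
    (volume_forall_not_digits_block_le G hG m w)) bot_le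
  filter_upwards [measure_eq_zero_iff_ae_notMem.mp hnull] with x hx hIco
  by_contra h
  exact hx ⟨hIco, not_exists.mp h⟩

theorem ofDigits_lt_one {b : ℕ} {d : ℕ → Fin b} (hd : ∃ n, (d n : ℕ) < b - 1) :
    ofDigits d < 1 := by
  obtain ⟨n, hn⟩ := hd
  have hb : 1 < b := by omega
  rw [← ofDigits_const_last_eq_one' hb]
  refine Summable.tsum_lt_tsum (i := n) (fun i => ?_) ?_ summable_ofDigitsTerm
    summable_ofDigitsTerm
  · unfold ofDigitsTerm
    gcongr
    exact Nat.le_sub_one_of_lt (d i).isLt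
  · unfold ofDigitsTerm
    gcongr

theorem ofDigits_le_inv_pow {b : ℕ} {d : ℕ → Fin b} {m : ℕ} (hd : ∀ j < m, (d j : ℕ) = 0) :
    ofDigits d ≤ ((b : ℝ) ^ m)⁻¹ := by
  rw [ofDigits_eq_sum_add_ofDigits d m, Finset.sum_eq_zero fun j hj => by
    simp [ofDigitsTerm, hd j (Finset.mem_range.mp hj)], zero_add]
  exact mul_le_of_le_one_right (by positivity) (ofDigits_le_one _)

theorem one_sub_inv_pow_le_ofDigits {b : ℕ} (hb : 1 < b) {d : ℕ → Fin b} {m : ℕ}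
    (hd : ∀ j < m, (d j : ℕ) = b - 1) : 1 - ((b : ℝ) ^ m)⁻¹ ≤ ofDigits d := by
  have hlast := ofDigits_eq_sum_add_ofDigits (fun _ => (⟨b - 1, by omega⟩ : Fin b)) m
  rw [ofDigits_const_last_eq_one' hb, mul_one] at hlast
  have hsum : ∑ i ∈ Finset.range m, ofDigitsTerm d i =
      ∑ i ∈ Finset.range m, ofDigitsTerm (fun _ => (⟨b - 1, by omega⟩ : Fin b)) i :=
    Finset.sum_congr rfl fun j hj => by simp [ofDigitsTerm, hd j (Finset.mem_range.mp hj)]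
  have : 0 ≤ ((b : ℝ) ^ m)⁻¹ * ofDigits fun i => d (i + m) :=
    mul_nonneg (by positivity) (ofDigits_nonneg _)
  rw [ofDigits_eq_sum_add_ofDigits d m, hsum]
  linarith

end Real

namespace MDP

theorem bit_eq_digits (m : ℕ) {x : ℝ} (hx : 0 ≤ x) : bit m x = (Real.digits x 2 m : ℕ) := by
  have hfloor := Int.natCast_floor_eq_floor (a := x * 2 ^ (m + 1)) (by positivity)
  simp only [bit, Real.digits, Fin.val_ofNat, ← hfloor]
  rcases Nat.mod_two_eq_zero_or_one ⌊x * 2 ^ (m + 1)⌋₊ with h | h <;> simp [h] <;> omega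

theorem unif_eq_ofDigits (k : ℕ) {x : ℝ} (hx : 0 ≤ x) :
    unif k x = Real.ofDigits fun n => Real.digits x 2 (Nat.pair k n) := by
  simp [unif, Real.ofDigits, Real.ofDigitsTerm, bit_eq_digits _ hx, div_eq_mul_inv]

theorem unif_nonneg (k : ℕ) (x : ℝ) : 0 ≤ unif k x :=
  tsum_nonneg fun n => div_nonneg (by unfold bit; split_ifs <;> norm_num) (by positivity)

theorem unif_zero (k : ℕ) : unif k 0 = 0 := by
  simp [unif, bit]

theorem ae_unif_lt_one : ∀ᵐ x : ℝ, x ∈ Set.Ico 0 1 → ∀ k, unif k x < 1 := by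
  have hk : ∀ k, ∀ᵐ x : ℝ, x ∈ Set.Ico 0 1 → unif k x < 1 := fun k => by
    have hG : Injective (uncurry fun n j => Nat.pair k (Nat.pair n j)) :=
      fun p q h => Prod.ext_iff.mpr (by simpa using (Nat.pair_eq_pair.mp h).2)
    filter_upwards [Real.ae_exists_digits_block_eq _ hG 1 0] with x hx hIco
    obtain ⟨n, hn⟩ := hx hIco
    rw [unif_eq_ofDigits k hIco.1]
    exact Real.ofDigits_lt_one ⟨Nat.pair n 0, by simp [hn 0 one_pos]⟩
  filter_upwards [ae_all_iff.mpr hk] with x hx hIco k using hx k hIco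

theorem ae_unif_lt_half_iff (k : ℕ) :
    ∀ᵐ x : ℝ, x ∈ Set.Ico 0 1 → (unif k x < 2⁻¹ ↔ Real.digits x 2 (Nat.pair k 0) = 0) := by
  -- the exceptional seeds are those whose later digits of stream `k` are all `1`
  have hG : Injective (uncurry fun n j => Nat.pair k (Nat.pair n j + 1)) :=
    fun p q h => Prod.ext_iff.mpr (by simpa using (Nat.pair_eq_pair.mp h).2)
  filter_upwards [Real.ae_exists_digits_block_eq _ hG 1 0] with x hx hIco
  obtain ⟨n, hn⟩ := hx hIco
  rw [unif_eq_ofDigits k hIco.1, Real.ofDigits_eq_sum_add_ofDigits _ 1]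
  have htail : Real.ofDigits (fun i => Real.digits x 2 (Nat.pair k (i + 1))) < 1 :=
    Real.ofDigits_lt_one ⟨Nat.pair n 0, by simp [hn 0 one_pos]⟩
  have := Real.ofDigits_nonneg fun i => Real.digits x 2 (Nat.pair k (i + 1))
  simp only [Finset.range_one, Finset.sum_singleton, Real.ofDigitsTerm]
  generalize Real.digits x 2 (Nat.pair k 0) = d
  fin_cases d <;> norm_num <;> linarith

theorem ae_exists_unif_lt {k : ℕ → ℕ} (hk : Injective k) {p : ℝ} (hp : 0 < p) :
    ∀ᵐ x : ℝ, x ∈ Set.Ico 0 1 → ∃ n, unif (k n) x < p := by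
  obtain ⟨m, hm⟩ := exists_pow_lt_of_lt_one hp (by norm_num : (2 : ℝ)⁻¹ < 1)
  have hG : Injective (uncurry fun n j => Nat.pair (k n) j) := fun p q h => by
    obtain ⟨h1, h2⟩ := Nat.pair_eq_pair.mp h
    exact Prod.ext (hk h1) h2
  filter_upwards [Real.ae_exists_digits_block_eq _ hG m 0] with x hx hIco
  obtain ⟨n, hn⟩ := hx hIco
  refine ⟨n, lt_of_le_of_lt ?_ hm⟩
  rw [unif_eq_ofDigits _ hIco.1, inv_pow]
  exact_mod_cast Real.ofDigits_le_inv_pow fun j hj => by simp [hn j hj]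

theorem ae_exists_lt_unif {k : ℕ → ℕ} (hk : Injective k) {p : ℝ} (hp : p < 1) :
    ∀ᵐ x : ℝ, x ∈ Set.Ico 0 1 → ∃ n, p < unif (k n) x := by
  obtain ⟨m, hm⟩ := exists_pow_lt_of_lt_one (sub_pos.mpr hp) (by norm_num : (2 : ℝ)⁻¹ < 1)
  have hG : Injective (uncurry fun n j => Nat.pair (k n) j) := fun p q h => by
    obtain ⟨h1, h2⟩ := Nat.pair_eq_pair.mp h
    exact Prod.ext (hk h1) h2
  filter_upwards [Real.ae_exists_digits_block_eq _ hG m 1] with x hx hIco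
  obtain ⟨n, hn⟩ := hx hIco
  have hle := Real.one_sub_inv_pow_le_ofDigits one_lt_two
    (d := fun j => Real.digits x 2 (Nat.pair (k n) j)) (m := m) fun j hj => by simp [hn j hj]
  rw [Nat.cast_ofNat, ← inv_pow, ← unif_eq_ofDigits _ hIco.1] at hle
  exact ⟨n, by linarith⟩

section Sampling

variable {S : Type} [Fintype S] [Nonempty S]

variable (S) in
/-- The outcome that `sample` tries first. The enumeration `Fintype.equivFin S` behind it is
not computable, so for `S = Fin 2` this may be either element. -/
noncomputable def firstOutcome : S := (Fintype.equivFin S).symm ⟨0, Fintype.card_pos⟩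

open Finset in
theorem sample_eq_firstOutcome_iff {q : S → ℝ} (hq : ∑ s, q s = 1) {u : ℝ} (hu : u < 1) :
    sample q u = firstOutcome S ↔ u < q (firstOutcome S) := by
  unfold sample firstOutcome
  set e := Fintype.equivFin S
  set i₀ : Fin (Fintype.card S) := ⟨0, Fintype.card_pos⟩
  have hi₀ : Iic i₀ = {i₀} := by
    ext j; simp only [mem_Iic, mem_singleton, Fin.le_iff_val_le_val, Fin.ext_iff, i₀]; omega
  have hlast : (⟨Fintype.card S - 1, Nat.sub_one_lt Fintype.card_ne_zero⟩ : Fin _) ∈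
      univ.filter fun i => u < ∑ j ∈ Iic i, q (e.symm j) := by
    have : Iic (⟨Fintype.card S - 1, Nat.sub_one_lt Fintype.card_ne_zero⟩ : Fin _) = univ := by
      ext j; simp only [mem_Iic, mem_univ, iff_true, Fin.le_iff_val_le_val]; omega
    simpa [this, e.symm.sum_comp q, hq] using hu
  rw [dif_pos ⟨_, hlast⟩, e.symm.apply_eq_iff_eq]
  constructor
  · intro h
    have := min'_mem _ ⟨_, hlast⟩
    rw [h] at this
    simpa [hi₀] using this
  · intro h
    refine le_antisymm (min'_le _ _ ?_) (Fin.le_iff_val_le_val.mpr (Nat.zero_le _))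
    simpa [hi₀] using h

open Finset in
theorem sample_diracD [DecidableEq S] (s : S) {u : ℝ} (hu₀ : 0 ≤ u) (hu₁ : u < 1) :
    sample (diracD s) u = s := by
  unfold sample
  set e := Fintype.equivFin S
  have hcum : ∀ i, ∑ j ∈ Iic i, diracD s (e.symm j) = if e s ≤ i then 1 else 0 := fun i => by
    simp [diracD, Equiv.symm_apply_eq, sum_ite_eq']
  have hmem : e s ∈ univ.filter fun i => u < ∑ j ∈ Iic i, diracD s (e.symm j) := by
    simpa [hcum] using hu₁
  rw [dif_pos ⟨_, hmem⟩, e.symm_apply_eq]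
  refine le_antisymm (min'_le _ _ hmem) (le_min' _ _ _ fun i hi => ?_)
  by_contra h
  simp only [mem_filter, mem_univ, true_and, hcum, h, if_false] at hi
  linarith

end Sampling

theorem sample_fin_two_eq_iff {q : Fin 2 → ℝ} (hq : ∑ s, q s = 1) (a : Fin 2) :
    (∀ u < 1, sample q u = a ↔ u < q a) ∨ (∀ u < 1, sample q u = a ↔ 1 - q a ≤ u) := by
  have hfirst := fun u (hu : u < 1) => sample_eq_firstOutcome_iff hq hu
  generalize firstOutcome (Fin 2) = c at hfirst
  rw [Fin.sum_univ_two] at hq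
  by_cases hac : a = c
  · subst hac
    exact Or.inl hfirst
  · refine Or.inr fun u hu => ?_
    have hother : ∀ b : Fin 2, b = a ↔ b ≠ c := by
      fin_cases a <;> fin_cases c <;> simp_all [Fin.forall_fin_two]
    have hqc : q c = 1 - q a := by
      fin_cases a <;> fin_cases c <;> simp_all <;> linarith
    rw [hother, Ne, hfirst u hu, hqc, not_lt]

theorem volume_sample_coin_eq (k : ℕ) (a : Fin 2) :
    volume {x : ℝ | x ∈ Set.Ico 0 1 ∧ sample (fun _ : Fin 2 => (2⁻¹ : ℝ)) (unif k x) = a} =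
      2⁻¹ := by
  have hdigit : ∀ w : Fin 2,
      volume {x : ℝ | x ∈ Set.Ico 0 1 ∧ Real.digits x 2 (Nat.pair k 0) = w} = 2⁻¹ := fun w => by
    simpa using Real.volume_digits_eq (fun _ : Unit => Nat.pair k 0) (fun _ _ _ => rfl) fun _ => w
  obtain ⟨w, hw⟩ : ∃ w : Fin 2, ∀ u < 1,
      sample (fun _ : Fin 2 => (2⁻¹ : ℝ)) u = a ↔ (u < 2⁻¹ ↔ w = 0) := by
    have hcoin : ∑ _ : Fin 2, (2⁻¹ : ℝ) = 1 := by norm_num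
    rcases sample_fin_two_eq_iff hcoin a with h | h
    · exact ⟨0, fun u hu => by simp [h u hu]⟩
    · exact ⟨1, fun u hu => by rw [h u hu]; norm_num⟩
  rw [← hdigit w]
  refine measure_congr (Filter.eventuallyEq_set.mpr ?_)
  filter_upwards [ae_unif_lt_one, ae_unif_lt_half_iff k] with x hx hhalf
  refine and_congr_right fun hIco => ?_
  rw [hw _ (hx hIco k), hhalf hIco]
  generalize Real.digits x 2 (Nat.pair k 0) = d
  fin_cases w <;> fin_cases d <;> simp

theorem ae_not_forall_sample_eq {q : Fin 2 → ℝ} (hq : ∑ s, q s = 1) {a : Fin 2} (ha : q a < 1)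
    {k : ℕ → ℕ} (hk : Injective k) :
    ∀ᵐ x : ℝ, x ∈ Set.Ico 0 1 → ¬ ∀ n, sample q (unif (k n) x) = a := by
  filter_upwards [ae_unif_lt_one, ae_exists_lt_unif hk ha, ae_exists_unif_lt hk (sub_pos.mpr ha)]
    with x hx hlarge hsmall hIco hall
  rcases sample_fin_two_eq_iff hq a with h | h
  · obtain ⟨n, hn⟩ := hlarge hIco
    exact hn.not_gt ((h _ (hx hIco _)).mp (hall n))
  · obtain ⟨n, hn⟩ := hsmall hIco
    exact hn.not_ge ((h _ (hx hIco _)).mp (hall n))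

variable {V A : Type} [Fintype V] [Fintype A]

theorem isDist_diracD [DecidableEq V] (u : V) : IsDist (diracD u) :=
  ⟨fun v => by unfold diracD; split_ifs <;> norm_num, by simp [diracD]⟩

theorem IsDist.eq_diracD [DecidableEq V] {q : V → ℝ} (hq : IsDist q) {a : V} (ha : q a = 1) :
    q = diracD a := by
  have hrest : ∑ v ∈ Finset.univ.erase a, q v = 0 := by
    linarith [Finset.add_sum_erase Finset.univ q (Finset.mem_univ a), hq.2]
  funext v
  by_cases hv : v = a
  · simp [diracD, hv, ha]
  · simp only [diracD, hv, if_false]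
    exact (Finset.sum_eq_zero_iff_of_nonneg fun w _ => hq.1 w).mp hrest v (by simp [hv])

theorem Strategy.isDist_act {M : MDP V A} (σ : M.Strategy) (h : List (V × A)) (v : V) :
    IsDist (σ.act h v) :=
  ⟨σ.act_nonneg h v, σ.act_sum h v⟩

variable [Nonempty V] [Nonempty A] {M : MDP V A} {σ : M.Strategy} {α : V → ℝ}

noncomputable def actionAt (M : MDP V A) (σ : M.Strategy) (α : V → ℝ) (x : ℝ) (n : ℕ) : A :=
  (M.run σ α x n).2.2

noncomputable def historyAt (M : MDP V A) (σ : M.Strategy) (α : V → ℝ) (x : ℝ) (n : ℕ) :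
    List (V × A) :=
  (M.run σ α x n).1

theorem historyAt_zero (x : ℝ) : M.historyAt σ α x 0 = [] := rfl

theorem historyAt_succ (x : ℝ) (n : ℕ) :
    M.historyAt σ α x (n + 1) = (M.stateAt σ α x n, M.actionAt σ α x n) :: M.historyAt σ α x n :=
  rfl

theorem actionAt_eq (x : ℝ) (n : ℕ) :
    M.actionAt σ α x n =
      sample (σ.act (M.historyAt σ α x n) (M.stateAt σ α x n)) (unif (2 * n + 1) x) := by
  cases n <;> rfl

theorem stateAt_zero_diracD [DecidableEq V] (u : V) {x : ℝ} (hx : unif 0 x < 1) :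
    M.stateAt σ (diracD u) x 0 = u :=
  sample_diracD u (unif_nonneg 0 x) hx

theorem stateAt_succ_of_diracD [DecidableEq V] {next : V → A → V}
    (hM : ∀ v a, M.p v a = diracD (next v a)) {x : ℝ} (hx : ∀ k, unif k x < 1) (n : ℕ) :
    M.stateAt σ α x (n + 1) = next (M.stateAt σ α x n) (M.actionAt σ α x n) := by
  show sample (M.p _ _) _ = _
  rw [hM]
  exact sample_diracD _ (unif_nonneg _ x) (hx _)

theorem stateAt_eq_of_pure [DecidableEq V] [DecidableEq A] {next : V → A → V}
    (hM : ∀ v a, M.p v a = diracD (next v a)) (hσ : σ.Pure) (u : V) {x y : ℝ}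
    (hx : ∀ k, unif k x < 1) (hy : ∀ k, unif k y < 1) :
    M.stateAt σ (diracD u) x = M.stateAt σ (diracD u) y := by
  choose f hf using hσ
  have hdirac : ∀ {z : ℝ}, (∀ k, unif k z < 1) → ∀ k (s : V), sample (diracD s) (unif k z) = s :=
    fun hz k s => sample_diracD s (unif_nonneg k _) (hz k)
  have hact : ∀ {z : ℝ}, (∀ k, unif k z < 1) → ∀ k h v, sample (σ.act h v) (unif k z) = f h v :=
    fun hz k h v => by
      rw [(σ.isDist_act h v).eq_diracD (hf h v)]
      exact sample_diracD _ (unif_nonneg k _) (hz k)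
  have hrun : ∀ n, M.run σ (diracD u) x n = M.run σ (diracD u) y n := by
    intro n
    induction n with
    | zero => simp only [run, hdirac hx, hdirac hy, hact hx, hact hy]
    | succ n ih => simp only [run, ih, hM, hdirac hx, hdirac hy, hact hx, hact hy]
  funext n
  exact congrArg (fun r => r.2.1) (hrun n)

variable {E : Set (ℕ → V)}

theorem prEvent_eq_of_ae {s : Set ℝ}
    (h : ∀ᵐ x : ℝ, x ∈ Set.Ico 0 1 → (M.stateAt σ α x ∈ E ↔ x ∈ s)) :
    M.PrEvent σ α E = (volume {x : ℝ | x ∈ Set.Ico 0 1 ∧ x ∈ s}).toReal := by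
  refine congrArg ENNReal.toReal (measure_congr (Filter.eventuallyEq_set.mpr ?_))
  filter_upwards [h, volume.ae_ne 1] with x hx hx1
  have hIcc : x ∈ Set.Icc 0 1 ↔ x ∈ Set.Ico 0 1 := by
    simp [lt_iff_le_and_ne, hx1]
  simp only [hIcc]
  exact and_congr_right hx

theorem prEvent_eq_zero_of_ae (h : ∀ᵐ x : ℝ, x ∈ Set.Ico 0 1 → M.stateAt σ α x ∉ E) :
    M.PrEvent σ α E = 0 := by
  rw [prEvent_eq_of_ae (s := ∅) (by
    filter_upwards [h] with x hx hIco using iff_of_false (hx hIco) id)]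
  simp

end MDP

section Absorbing

variable {V : Type} {w : ℕ → V} {P : Set V}

theorem mem_of_absorbing_of_le (hP : ∀ n, w n ∈ P → w (n + 1) ∈ P) {n m : ℕ} (hnm : n ≤ m)
    (hn : w n ∈ P) : w m ∈ P := by
  induction m, hnm using Nat.le_induction with
  | base => exact hn
  | succ m _ ih => exact hP m ih

theorem mem_infOften_iff_exists_of_absorbing (hP : ∀ n, w n ∈ P → w (n + 1) ∈ P) :
    w ∈ InfOften P ↔ ∃ n, w n ∈ P := by
  refine ⟨fun h => ?_, fun ⟨n, hn⟩ N => ⟨max N n, le_max_left N n,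
    mem_of_absorbing_of_le hP (le_max_right N n) hn⟩⟩
  obtain ⟨m, -, hm⟩ := h 0
  exact ⟨m, hm⟩

theorem mem_infOften_compl_iff_forall_of_absorbing (hP : ∀ n, w n ∈ P → w (n + 1) ∈ P) :
    w ∈ InfOften Pᶜ ↔ ∀ n, w n ∉ P := by
  refine ⟨fun h n hn => ?_, fun h N => ⟨N, le_rfl, h N⟩⟩
  obtain ⟨m, hnm, hm⟩ := h n
  exact hm (mem_of_absorbing_of_le hP hnm hn)

end Absorbing

open MDP

def exitStep (v a : Fin 2) : Fin 2 := if v = 0 ∧ a = 0 then 0 else 1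

def exitMDP : MDP (Fin 2) (Fin 2) where
  enabled v := if v = 0 then {0, 1} else {0}
  enabled_nonempty v := by split_ifs <;> simp
  p v a := diracD (exitStep v a)
  p_nonneg v a := (isDist_diracD _).1
  p_sum v a _ := (isDist_diracD _).2

namespace exitMDP

section Runs

variable {σ : exitMDP.Strategy} {x : ℝ}

theorem stateAt_zero (hx : ∀ k, unif k x < 1) : exitMDP.stateAt σ (diracD 0) x 0 = 0 :=
  stateAt_zero_diracD 0 (hx 0)

theorem stateAt_succ (hx : ∀ k, unif k x < 1) (n : ℕ) :
    exitMDP.stateAt σ (diracD 0) x (n + 1) =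
      exitStep (exitMDP.stateAt σ (diracD 0) x n) (exitMDP.actionAt σ (diracD 0) x n) :=
  stateAt_succ_of_diracD (fun _ _ => rfl) hx n

theorem forall_stateAt_eq_zero_iff (hx : ∀ k, unif k x < 1) :
    (∀ n, exitMDP.stateAt σ (diracD 0) x n = 0) ↔
      ∀ n, exitMDP.stateAt σ (diracD 0) x n = 0 → exitMDP.actionAt σ (diracD 0) x n = 0 := by
  refine ⟨fun h n _ => ?_, fun h n => ?_⟩
  · have := h (n + 1)
    rw [stateAt_succ hx, h n] at this
    revert this
    generalize exitMDP.actionAt σ (diracD 0) x n = a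
    fin_cases a <;> simp [exitStep]
  · induction n with
    | zero => exact stateAt_zero hx
    | succ n ih => rw [stateAt_succ hx, ih, h n ih]; rfl

theorem stateAt_absorbing (hx : ∀ k, unif k x < 1) (n : ℕ) :
    exitMDP.stateAt σ (diracD 0) x n ∈ ({1} : Set (Fin 2)) →
      exitMDP.stateAt σ (diracD 0) x (n + 1) ∈ ({1} : Set (Fin 2)) := by
  intro h
  rw [Set.mem_singleton_iff] at h ⊢
  rw [stateAt_succ hx, h]
  simp [exitStep]

theorem mem_infOften_zero_iff (hx : ∀ k, unif k x < 1) :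
    exitMDP.stateAt σ (diracD 0) x ∈ InfOften {0} ↔
      ∀ n, exitMDP.stateAt σ (diracD 0) x n = 0 := by
  have h01 : ({0} : Set (Fin 2)) = {1}ᶜ := by ext v; fin_cases v <;> simp
  rw [h01, mem_infOften_compl_iff_forall_of_absorbing (stateAt_absorbing hx)]
  refine forall_congr' fun n => ?_
  generalize exitMDP.stateAt σ (diracD 0) x n = v
  fin_cases v <;> simp

theorem mem_infOften_one_iff (hx : ∀ k, unif k x < 1) :
    exitMDP.stateAt σ (diracD 0) x ∈ InfOften {1} ↔
      ¬ ∀ n, exitMDP.stateAt σ (diracD 0) x n = 0 := by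
  rw [mem_infOften_iff_exists_of_absorbing (stateAt_absorbing hx), not_forall]
  refine exists_congr fun n => ?_
  generalize exitMDP.stateAt σ (diracD 0) x n = v
  fin_cases v <;> simp

end Runs

noncomputable def coinThenStay : exitMDP.Strategy where
  act h v := if v = 0 ∧ h = [] then fun _ => 2⁻¹ else diracD 0
  act_nonneg h v a := by
    split_ifs
    · norm_num
    · exact (isDist_diracD 0).1 a
  act_support h v a ha := by
    have hv : v ≠ 0 := by rintro rfl; fin_cases a <;> simp [exitMDP] at ha
    simp only [hv, false_and, if_false]
    have ha0 : a ≠ 0 := by rintro rfl; simp [exitMDP, hv] at ha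
    simp [diracD, ha0]
  act_sum h v := by
    split_ifs
    · norm_num
    · exact (isDist_diracD 0).2

theorem coinThenStay_act_nil : coinThenStay.act [] 0 = fun _ => 2⁻¹ := by
  simp [coinThenStay]

theorem coinThenStay_act_cons (p : Fin 2 × Fin 2) (h : List (Fin 2 × Fin 2)) (v : Fin 2) :
    coinThenStay.act (p :: h) v = diracD 0 := by
  simp [coinThenStay]

theorem coinThenStay_mem_infOften_iff {x : ℝ} (hx : ∀ k, unif k x < 1) (a : Fin 2) :
    exitMDP.stateAt coinThenStay (diracD 0) x ∈ InfOften {a} ↔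
      sample (fun _ : Fin 2 => (2⁻¹ : ℝ)) (unif 1 x) = a := by
  have hfirst : exitMDP.actionAt coinThenStay (diracD 0) x 0 =
      sample (fun _ : Fin 2 => (2⁻¹ : ℝ)) (unif 1 x) := by
    rw [actionAt_eq, historyAt_zero, stateAt_zero hx, coinThenStay_act_nil]
  have hlater : ∀ n, exitMDP.actionAt coinThenStay (diracD 0) x (n + 1) = 0 := fun n => by
    rw [actionAt_eq, historyAt_succ, coinThenStay_act_cons]
    exact sample_diracD 0 (unif_nonneg _ x) (hx _)
  have hstay : (∀ n, exitMDP.stateAt coinThenStay (diracD 0) x n = 0) ↔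
      sample (fun _ : Fin 2 => (2⁻¹ : ℝ)) (unif 1 x) = 0 := by
    rw [forall_stateAt_eq_zero_iff hx, ← hfirst]
    refine ⟨fun h => h 0 (stateAt_zero hx), fun h n _ => ?_⟩
    cases n with
    | zero => exact h
    | succ n => exact hlater n
  match a with
  | 0 => exact (mem_infOften_zero_iff hx).trans hstay
  | 1 =>
    rw [mem_infOften_one_iff hx, hstay]
    generalize sample (fun _ : Fin 2 => (2⁻¹ : ℝ)) (unif 1 x) = b
    fin_cases b <;> simp

theorem prEvent_coinThenStay (a : Fin 2) :
    exitMDP.PrEvent coinThenStay (diracD 0) (InfOften {a}) = 1 / 2 := by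
  rw [prEvent_eq_of_ae (s := {x | sample (fun _ : Fin 2 => (2⁻¹ : ℝ)) (unif 1 x) = a})
    (by filter_upwards [ae_unif_lt_one] with x hx hIco using
      coinThenStay_mem_infOften_iff (hx hIco) a)]
  simp only [Set.mem_ofPred_eq, volume_sample_coin_eq]
  norm_num

theorem prEvent_eq_zero_of_memoryless {σ : exitMDP.Strategy} (hσ : σ.Memoryless) :
    exitMDP.PrEvent σ (diracD 0) (InfOften {0}) = 0 ∨
      exitMDP.PrEvent σ (diracD 0) (InfOften {1}) = 0 := by
  set q := σ.act [] 0
  have hq : q 0 + q 1 = 1 := by rw [← Fin.sum_univ_two]; exact σ.act_sum [] 0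
  have hact : ∀ {x : ℝ} n, exitMDP.stateAt σ (diracD 0) x n = 0 →
      exitMDP.actionAt σ (diracD 0) x n = sample q (unif (2 * n + 1) x) := fun n hn => by
    rw [actionAt_eq, hn, hσ _ []]
  by_cases hq1 : q 1 = 0
  · have hq0 : q = diracD 0 := (σ.isDist_act [] 0).eq_diracD (by linarith)
    refine Or.inr (prEvent_eq_zero_of_ae ?_)
    filter_upwards [ae_unif_lt_one] with x hx hIco
    rw [mem_infOften_one_iff (hx hIco), not_not, forall_stateAt_eq_zero_iff (hx hIco)]
    intro n hn
    rw [hact n hn, hq0]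
    exact sample_diracD 0 (unif_nonneg _ x) (hx hIco _)
  · have hq0 : q 0 < 1 := by linarith [lt_of_le_of_ne (σ.act_nonneg [] 0 1) (Ne.symm hq1)]
    refine Or.inl (prEvent_eq_zero_of_ae ?_)
    filter_upwards [ae_unif_lt_one, ae_not_forall_sample_eq (σ.act_sum [] 0) hq0
      (k := fun n => 2 * n + 1) fun m n h => by simp only at h; omega] with x hx hnot hIco hinf
    rw [mem_infOften_zero_iff (hx hIco)] at hinf
    exact hnot hIco fun n => (hact n (hinf n)).symm.trans
      ((forall_stateAt_eq_zero_iff (hx hIco)).mp hinf n (hinf n))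

theorem prEvent_eq_zero_of_pure {σ : exitMDP.Strategy} (hσ : σ.Pure) :
    exitMDP.PrEvent σ (diracD 0) (InfOften {0}) = 0 ∨
      exitMDP.PrEvent σ (diracD 0) (InfOften {1}) = 0 := by
  have h0 : ∀ k, unif k 0 < 1 := fun k => by simp [unif_zero]
  have hrun : ∀ᵐ x : ℝ, x ∈ Set.Ico 0 1 →
      exitMDP.stateAt σ (diracD 0) x = exitMDP.stateAt σ (diracD 0) 0 := by
    filter_upwards [ae_unif_lt_one] with x hx hIco using
      stateAt_eq_of_pure (fun _ _ => rfl) hσ 0 (hx hIco) h0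
  by_cases hstay : ∀ n, exitMDP.stateAt σ (diracD 0) 0 n = 0
  · refine Or.inr (prEvent_eq_zero_of_ae ?_)
    filter_upwards [hrun] with x hx hIco
    rw [hx hIco, mem_infOften_one_iff h0, not_not]
    exact hstay
  · refine Or.inl (prEvent_eq_zero_of_ae ?_)
    filter_upwards [hrun] with x hx hIco
    rw [hx hIco, mem_infOften_zero_iff h0]
    exact hstay

end exitMDP

open MDP in
/-- There is a finite labeled MDP `M'` with initial state `u` and two propositional
labels `P₁`, `P₂` (given as the sets of states carrying each label) such that:
(a) some (randomized, history-dependent) strategy satisfies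
`Pr^σ_u(□◇P₁) > 0 ∧ Pr^σ_u(□◇P₂) > 0` — indeed both probabilities equal `1/2`;
(b) no memoryless strategy makes both probabilities positive; and
(c) no pure (deterministic) strategy makes both probabilities positive. -/
theorem qualitative_queries_need_memory_and_randomization :
    ∃ (nV nA : ℕ) (M : MDP (Fin (nV + 1)) (Fin (nA + 1)))
      (u : Fin (nV + 1)) (P1 P2 : Set (Fin (nV + 1))),
      (∃ σ : M.Strategy,
        M.PrEvent σ (diracD u) (InfOften P1) = 1 / 2 ∧
        M.PrEvent σ (diracD u) (InfOften P2) = 1 / 2) ∧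
      (∀ σ : M.Strategy, σ.Memoryless →
        ¬ (0 < M.PrEvent σ (diracD u) (InfOften P1) ∧
           0 < M.PrEvent σ (diracD u) (InfOften P2))) ∧
      (∀ σ : M.Strategy, σ.Pure →
        ¬ (0 < M.PrEvent σ (diracD u) (InfOften P1) ∧
           0 < M.PrEvent σ (diracD u) (InfOften P2))) := by
  refine ⟨1, 1, exitMDP, 0, {0}, {1}, ⟨exitMDP.coinThenStay, exitMDP.prEvent_coinThenStay 0,
    exitMDP.prEvent_coinThenStay 1⟩, fun σ hσ ⟨h0, h1⟩ => ?_, fun σ hσ ⟨h0, h1⟩ => ?_⟩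
  · exact (exitMDP.prEvent_eq_zero_of_memoryless hσ).elim h0.ne' h1.ne'
  · exact (exitMDP.prEvent_eq_zero_of_pure hσ).elim h0.ne' h1.ne'
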